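/- Let A be a set of graphs, C a bridge-stable class of connected graphs each bridge-addable in A, and fix n with A_n nonempty. For k ≥ 1 let A^k = {G ∈ A_n : κ⁺(G,C) = k}. Then |A^{k+1}|·k(n−k) ≤ |A^k|·(n−k) for every k ≥ 1 with A^{k+1} nonempty; in particular |A^{k+1}| ≤ |A^k|/k for all k ≥ 1. -/

import Mathlib

open scoped Classical

/-- Membership of a graph `H` in an isomorphism-closed class `C`. -/
def memClass (C : ∀ m : ℕ, Set (SimpleGraph (Fin m))) {V : Type*} (H : SimpleGraph V) : Prop :=
  ∃ H' ∈ C (Nat.card V), Nonempty (H ≃g H')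

/-- Add the edge `uv` to `G`. -/
def addEdge {V : Type*} (G : SimpleGraph V) (u v : V) : SimpleGraph V :=
  G ⊔ SimpleGraph.fromEdgeSet {s(u, v)}

/-- The component of `v` in `G`, as a graph. -/
abbrev compGraph {n : ℕ} (G : SimpleGraph (Fin n)) (v : Fin n) :=
  G.induce (G.connectedComponentMk v).supp

/-- The component `c`, as a graph. -/
abbrev compGraph' {n : ℕ} (G : SimpleGraph (Fin n)) (c : G.ConnectedComponent) :=
  G.induce c.supp

/-- Bridge-stability of a class of connected graphs. -/
def bridgeStable (C : ∀ m : ℕ, Set (SimpleGraph (Fin m))) : Prop :=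
  ∀ (m : ℕ) (G : SimpleGraph (Fin m)) (S : Set (Fin m)) (u v : Fin m),
    u ∈ S → v ∉ S → (∀ x ∈ S, ∀ y, y ∉ S → ¬ G.Adj x y) →
    ((memClass C (G.induce S) ∧ memClass C (G.induce Sᶜ)) → memClass C (addEdge G u v)) ∧
    ((memClass C (G.induce S) ↔ ¬ memClass C (G.induce Sᶜ)) → ¬ memClass C (addEdge G u v))

/-- `κ⁺(G, C)`: number of components of `G` in `C`, plus `1` if some component is not in `C`. -/
noncomputable def kappaPlus (C : ∀ m : ℕ, Set (SimpleGraph (Fin m))) {n : ℕ}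
    (G : SimpleGraph (Fin n)) : ℕ :=
  Nat.card {c : G.ConnectedComponent // memClass C (compGraph' G c)} +
    (if ∀ c : G.ConnectedComponent, memClass C (compGraph' G c) then 0 else 1)

/-- `|A^k|` where `A^k = {G ∈ A_n : κ⁺(G,C) = k}`. -/
noncomputable def cardAk (C : ∀ m : ℕ, Set (SimpleGraph (Fin m))) {n : ℕ}
    (𝒜 : Finset (SimpleGraph (Fin n))) (k : ℕ) : ℕ :=
  Nat.card {G : SimpleGraph (Fin n) // G ∈ 𝒜 ∧ kappaPlus C G = k}



open SimpleGraph Finset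

lemma memClass_iso {C : ∀ m : ℕ, Set (SimpleGraph (Fin m))} {V V' : Type*} {H : SimpleGraph V}
    {H' : SimpleGraph V'} (e : H ≃g H') : memClass C H ↔ memClass C H' := by
  have hc : Nat.card V = Nat.card V' := Nat.card_congr e.toEquiv
  unfold memClass
  rw [hc]
  constructor
  · rintro ⟨K, hK, ⟨i⟩⟩; exact ⟨K, hK, ⟨e.symm.trans i⟩⟩
  · rintro ⟨K, hK, ⟨i⟩⟩; exact ⟨K, hK, ⟨e.trans i⟩⟩

def comapIso {A B V : Type*} (G : SimpleGraph V) (f : A → V) (g : B → V) (e : A ≃ B)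
    (h : ∀ a, g (e a) = f a) : G.comap f ≃g G.comap g where
  toEquiv := e
  map_rel_iff' := by intro a b; simp [h]

lemma addEdge_adj {V : Type*} (G : SimpleGraph V) (u v x y : V) :
    (addEdge G u v).Adj x y ↔ G.Adj x y ∨ (s(x,y) = s(u,v) ∧ x ≠ y) := by
  simp [addEdge, SimpleGraph.fromEdgeSet_adj]

open SimpleGraph in
/-- Transport of `bridgeStable` to the merged union of two components. -/
lemma merged_class (C : ∀ m : ℕ, Set (SimpleGraph (Fin m))) (hstable : bridgeStable C)
    {n : ℕ} (G : SimpleGraph (Fin n)) (u v : Fin n) (huv : ¬ G.Reachable u v) :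
    ((memClass C (G.induce (G.connectedComponentMk u).supp) ∧
      memClass C (G.induce (G.connectedComponentMk v).supp)) →
        memClass C ((addEdge G u v).induce
          ((G.connectedComponentMk u).supp ∪ (G.connectedComponentMk v).supp))) ∧
    ((memClass C (G.induce (G.connectedComponentMk u).supp) ↔
      ¬ memClass C (G.induce (G.connectedComponentMk v).supp)) →
        ¬ memClass C ((addEdge G u v).induce
          ((G.connectedComponentMk u).supp ∪ (G.connectedComponentMk v).supp))) := by
  set cu := G.connectedComponentMk u with hcu
  set cv := G.connectedComponentMk v with hcv
  set W : Set (Fin n) := cu.supp ∪ cv.supp with hW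
  have huW : u ∈ W := Or.inl (by simp [ConnectedComponent.mem_supp_iff, hcu])
  have hvW : v ∈ W := Or.inr (by simp [ConnectedComponent.mem_supp_iff, hcv])
  have hdisj : ∀ x : Fin n, x ∈ cu.supp → x ∉ cv.supp := by
    intro x hx hx'
    rw [ConnectedComponent.mem_supp_iff] at hx hx'
    exact huv (ConnectedComponent.eq.mp (hx.symm.trans hx'))
  have hfin : Fintype.card ↥W = Nat.card ↥W := (Nat.card_eq_fintype_card).symm
  set m' := Nat.card ↥W
  set φ : Fin m' ≃ ↥W := ((Fintype.equivFin ↥W).trans (finCongr hfin)).symm with hφ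
  set f : Fin m' → Fin n := fun i => (φ i : Fin n) with hf
  have hfinj : Function.Injective f := fun a b h => φ.injective (Subtype.ext h)
  set G₀ : SimpleGraph (Fin m') := G.comap f with hG₀
  set S₀ : Set (Fin m') := {i | f i ∈ cu.supp} with hS₀
  set u₀ : Fin m' := φ.symm ⟨u, huW⟩ with hu₀
  set v₀ : Fin m' := φ.symm ⟨v, hvW⟩ with hv₀
  have hfu : f u₀ = u := by simp [hf, hu₀]
  have hfv : f v₀ = v := by simp [hf, hv₀]
  have hu₀S : u₀ ∈ S₀ := by
    simp only [hS₀, Set.mem_setOf_eq, hfu, ConnectedComponent.mem_supp_iff, hcu]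
  have hv₀S : v₀ ∉ S₀ := by
    simp only [hS₀, Set.mem_setOf_eq, hfv]
    intro h
    exact hdisj v h (by simp [ConnectedComponent.mem_supp_iff, hcv])
  have hrange : ∀ i : Fin m', f i ∈ W := fun i => (φ i).2
  have hcompl : ∀ i : Fin m', i ∈ S₀ᶜ ↔ f i ∈ cv.supp := by
    intro i
    constructor
    · intro h
      rcases hrange i with h1 | h1
      · exact absurd h1 h
      · exact h1
    · intro h hS
      exact hdisj _ hS h
  have hcross : ∀ x ∈ S₀, ∀ y, y ∉ S₀ → ¬ G₀.Adj x y := by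
    intro x hx y hy hadj
    have : G.Reachable (f x) (f y) := SimpleGraph.Adj.reachable (by exact hadj)
    have hx' : G.connectedComponentMk (f x) = cu := hx
    have hy' : G.connectedComponentMk (f y) = cv := (hcompl y).mp hy
    have : cu = cv := by
      rw [← hx', ← hy']
      exact ConnectedComponent.eq.mpr ‹G.Reachable (f x) (f y)›
    exact hdisj u (by simp [ConnectedComponent.mem_supp_iff, hcu]) (by rw [← this]; simp [ConnectedComponent.mem_supp_iff, hcu])
  -- isos
  have isoS : memClass C (G₀.induce S₀) ↔ memClass C (G.induce cu.supp) := by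
    refine memClass_iso (comapIso G (fun i : S₀ => f i.1) (Subtype.val) ?_ ?_)
    · exact { toFun := fun i => ⟨f i.1, i.2⟩
              invFun := fun j => ⟨φ.symm ⟨j.1, Or.inl j.2⟩, by
                simp only [hS₀, Set.mem_setOf_eq, hf, Equiv.apply_symm_apply]; exact j.2⟩
              left_inv := fun i => by
                apply Subtype.ext
                apply hfinj
                simp [hf]
              right_inv := fun j => by
                apply Subtype.ext
                simp [hf] }
    · intro a; rfl
  have isoSc : memClass C (G₀.induce S₀ᶜ) ↔ memClass C (G.induce cv.supp) := by
    refine memClass_iso (comapIso G (fun i : ↥S₀ᶜ => f i.1) (Subtype.val) ?_ ?_)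
    · exact { toFun := fun i => ⟨f i.1, (hcompl i.1).mp i.2⟩
              invFun := fun j => ⟨φ.symm ⟨j.1, Or.inr j.2⟩, by
                apply (hcompl _).mpr
                simp only [hf, Equiv.apply_symm_apply]; exact j.2⟩
              left_inv := fun i => by
                apply Subtype.ext; apply hfinj; simp [hf]
              right_inv := fun j => by
                apply Subtype.ext; simp [hf] }
    · intro a; rfl
  have isoM : memClass C (addEdge G₀ u₀ v₀) ↔ memClass C ((addEdge G u v).induce W) := by
    refine memClass_iso ?_
    refine { toEquiv := φ.trans (Equiv.refl _) , map_rel_iff' := ?_ }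
    intro a b
    simp only [Equiv.trans_apply, Equiv.refl_apply]
    show (addEdge G u v).Adj (φ a) (φ b) ↔ (addEdge G₀ u₀ v₀).Adj a b
    rw [addEdge_adj, addEdge_adj]
    have h1 : G.Adj ↑(φ a) ↑(φ b) ↔ G₀.Adj a b := Iff.rfl
    have h2 : (s((φ a : Fin n), (φ b : Fin n)) = s(u, v) ∧ (φ a : Fin n) ≠ (φ b : Fin n))
        ↔ (s(a, b) = s(u₀, v₀) ∧ a ≠ b) := by
      constructor
      · rintro ⟨he, hne⟩
        rw [Sym2.eq_iff] at he
        constructor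
        · rcases he with ⟨h1', h2'⟩ | ⟨h1', h2'⟩
          · have : φ a = ⟨u, huW⟩ := Subtype.ext h1'
            have hb : φ b = ⟨v, hvW⟩ := Subtype.ext h2'
            rw [Sym2.eq_iff]
            left
            constructor
            · rw [hu₀, ← this, Equiv.symm_apply_apply]
            · rw [hv₀, ← hb, Equiv.symm_apply_apply]
          · have : φ a = ⟨v, hvW⟩ := Subtype.ext h1'
            have hb : φ b = ⟨u, huW⟩ := Subtype.ext h2'
            rw [Sym2.eq_iff]
            right
            constructor
            · rw [hv₀, ← this, Equiv.symm_apply_apply]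
            · rw [hu₀, ← hb, Equiv.symm_apply_apply]
        · intro h; exact hne (by rw [h])
      · rintro ⟨he, hne⟩
        rw [Sym2.eq_iff] at he
        constructor
        · rw [Sym2.eq_iff]
          rcases he with ⟨rfl, rfl⟩ | ⟨rfl, rfl⟩
          · left; constructor <;> simp [hf, hu₀, hv₀]
          · right; constructor <;> simp [hf, hu₀, hv₀]
        · intro h
          exact hne (φ.injective (Subtype.ext h))
    rw [h1, h2]
  have := hstable m' G₀ S₀ u₀ v₀ hu₀S hv₀S hcross
  constructor
  · intro h
    exact (isoM.mp (this.1 ⟨isoS.mpr h.1, isoSc.mpr h.2⟩))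
  · intro h hM
    exact (this.2 (by rw [isoS, isoSc]; exact h)) (isoM.mpr hM)

lemma deleteEdges_addEdge {V : Type*} (G : SimpleGraph V) (u v : V) (h : ¬ G.Adj u v) :
    (addEdge G u v).deleteEdges {s(u,v)} = G := by
  ext x y
  simp only [SimpleGraph.deleteEdges_adj, addEdge_adj, Set.mem_singleton_iff]
  constructor
  · rintro ⟨hx | ⟨he, hne⟩, hn⟩
    · exact hx
    · exact absurd he hn
  · intro hx
    refine ⟨Or.inl hx, ?_⟩
    intro he
    rw [Sym2.eq_iff] at he
    rcases he with ⟨rfl, rfl⟩ | ⟨rfl, rfl⟩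
    · exact h hx
    · exact h hx.symm

lemma le_addEdge {V : Type*} (G : SimpleGraph V) (u v : V) : G ≤ addEdge G u v := le_sup_left

lemma reachable_addEdge_iff {V : Type*} (G : SimpleGraph V) (u v x y : V) :
    (addEdge G u v).Reachable x y ↔ G.Reachable x y ∨
      (G.Reachable x u ∧ G.Reachable v y) ∨ (G.Reachable x v ∧ G.Reachable u y) := by
  constructor
  · rintro ⟨w⟩
    induction w with
    | nil => exact Or.inl (SimpleGraph.Reachable.refl _)
    | cons h p ih =>
      rename_i a b c
      rw [addEdge_adj] at h
      rcases h with h | ⟨he, hne⟩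
      · have hab : G.Reachable a b := h.reachable
        rcases ih with h1 | ⟨h1, h2⟩ | ⟨h1, h2⟩
        · exact Or.inl (hab.trans h1)
        · exact Or.inr (Or.inl ⟨hab.trans h1, h2⟩)
        · exact Or.inr (Or.inr ⟨hab.trans h1, h2⟩)
      · rw [Sym2.eq_iff] at he
        rcases he with ⟨rfl, rfl⟩ | ⟨rfl, rfl⟩
        · rcases ih with h1 | ⟨h1, h2⟩ | ⟨h1, h2⟩
          · exact Or.inr (Or.inl ⟨SimpleGraph.Reachable.refl _, h1⟩)
          · exact Or.inr (Or.inl ⟨SimpleGraph.Reachable.refl _, h2⟩)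
          · exact Or.inl h2
        · rcases ih with h1 | ⟨h1, h2⟩ | ⟨h1, h2⟩
          · exact Or.inr (Or.inr ⟨SimpleGraph.Reachable.refl _, h1⟩)
          · exact Or.inl h2
          · exact Or.inr (Or.inr ⟨SimpleGraph.Reachable.refl _, h2⟩)
  · have mono : ∀ a b : V, G.Reachable a b → (addEdge G u v).Reachable a b := by
      intro a b h; exact h.mono (le_addEdge G u v)
    rcases eq_or_ne u v with rfl | huv
    · rintro (h | ⟨h1, h2⟩ | ⟨h1, h2⟩)
      · exact mono _ _ h
      · exact (mono _ _ h1).trans (mono _ _ h2)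
      · exact (mono _ _ h1).trans (mono _ _ h2)
    · have huv' : (addEdge G u v).Reachable u v :=
        (SimpleGraph.Adj.reachable (by rw [addEdge_adj]; exact Or.inr ⟨rfl, huv⟩))
      rintro (h | ⟨h1, h2⟩ | ⟨h1, h2⟩)
      · exact mono _ _ h
      · exact ((mono _ _ h1).trans huv').trans (mono _ _ h2)
      · exact ((mono _ _ h1).trans huv'.symm).trans (mono _ _ h2)

section Kappa
variable (C : ∀ m : ℕ, Set (SimpleGraph (Fin m))) {n : ℕ}

lemma induce_addEdge_eq {V : Type*} (G : SimpleGraph V) (u v : V) (S : Set V) (hu : u ∉ S) :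
    (addEdge G u v).induce S = G.induce S := by
  ext x y
  show (addEdge G u v).Adj x.1 y.1 ↔ G.Adj x.1 y.1
  rw [addEdge_adj]
  constructor
  · rintro (h | ⟨he, hne⟩)
    · exact h
    · rw [Sym2.eq_iff] at he
      rcases he with ⟨h1, h2⟩ | ⟨h1, h2⟩
      · exact absurd (h1 ▸ x.2) hu
      · exact absurd (h2 ▸ y.2) hu
  · exact Or.inl

variable (G : SimpleGraph (Fin n)) (u v : Fin n)

lemma kappa_addEdge (huv : ¬ G.Reachable u v) (hstable : bridgeStable C) (hu : memClass C (compGraph G u)) :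
    kappaPlus C (addEdge G u v) + 1 = kappaPlus C G := by
  classical
  set G' := addEdge G u v with hG'
  set cu := G.connectedComponentMk u with hcu
  set cv := G.connectedComponentMk v with hcv
  have hcucv : cu ≠ cv := fun h => huv (ConnectedComponent.eq.mp h)
  set π : G.ConnectedComponent → G'.ConnectedComponent :=
    ConnectedComponent.map (Hom.ofLE (le_addEdge G u v)) with hπ
  have hπmk : ∀ x : Fin n, π (G.connectedComponentMk x) = G'.connectedComponentMk x := by
    intro x; rfl
  have hsurj : Function.Surjective π := by
    intro c'
    refine c'.ind (fun x => ⟨G.connectedComponentMk x, hπmk x⟩)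
  have hmk'_eq : ∀ x y : Fin n, G'.connectedComponentMk x = G'.connectedComponentMk y ↔
      (G.Reachable x y ∨ (G.Reachable x u ∧ G.Reachable v y) ∨
       (G.Reachable x v ∧ G.Reachable u y)) := by
    intro x y
    rw [ConnectedComponent.eq, hG', reachable_addEdge_iff]
  have hpi_eq : ∀ c d : G.ConnectedComponent, π c = π d ↔
      (c = d ∨ ((c = cu ∨ c = cv) ∧ (d = cu ∨ d = cv))) := by
    intro c d
    refine c.ind (fun x => d.ind (fun y => ?_))
    rw [hπmk, hπmk, hmk'_eq]
    simp only [hcu, hcv, ConnectedComponent.eq]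
    constructor
    · rintro (h | ⟨h1, h2⟩ | ⟨h1, h2⟩)
      · exact Or.inl h
      · exact Or.inr ⟨Or.inl h1, Or.inr h2.symm⟩
      · exact Or.inr ⟨Or.inr h1, Or.inl h2.symm⟩
    · rintro (h | ⟨(h1 | h1), (h2 | h2)⟩)
      · exact Or.inl h
      · exact Or.inl (h1.trans h2.symm)
      · exact Or.inr (Or.inl ⟨h1, h2.symm⟩)
      · exact Or.inr (Or.inr ⟨h1, h2.symm⟩)
      · exact Or.inl (h1.trans h2.symm)
  have hsupp_other : ∀ c : G.ConnectedComponent, c ≠ cu → c ≠ cv →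
      (π c).supp = c.supp := by
    intro c
    refine c.ind (fun x hx1 hx2 => ?_)
    have hxu : ¬ G.Reachable x u := fun h => hx1 (by rw [hcu]; exact ConnectedComponent.eq.mpr h)
    have hxv : ¬ G.Reachable x v := fun h => hx2 (by rw [hcv]; exact ConnectedComponent.eq.mpr h)
    ext y
    simp only [ConnectedComponent.mem_supp_iff, hπmk, hmk'_eq, ConnectedComponent.eq]
    constructor
    · rintro (h | ⟨h1, h2⟩ | ⟨h1, h2⟩)
      · exact h
      · exact absurd h2.symm hxv
      · exact absurd h2.symm hxu
    · exact Or.inl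
  have hsupp_merged : (π cu).supp = cu.supp ∪ cv.supp := by
    ext y
    simp only [Set.mem_union, ConnectedComponent.mem_supp_iff, hcu, hcv, hπmk, hmk'_eq,
      ConnectedComponent.eq]
    constructor
    · rintro (h | ⟨h1, h2⟩ | ⟨h1, h2⟩)
      · exact Or.inl h
      · exact Or.inl h1
      · exact Or.inr h1
    · rintro (h | h)
      · exact Or.inl h
      · exact Or.inr (Or.inr ⟨h, Reachable.refl u⟩)
  have hmem_other : ∀ c : G.ConnectedComponent, c ≠ cu → c ≠ cv →
      (memClass C (compGraph' G' (π c)) ↔ memClass C (compGraph' G c)) := by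
    intro c h1 h2
    unfold compGraph'
    rw [hsupp_other c h1 h2]
    have hun : u ∉ c.supp := by
      intro h
      rw [ConnectedComponent.mem_supp_iff] at h
      exact h1 (h ▸ hcu ▸ rfl)
    rw [induce_addEdge_eq G u v c.supp hun]
  have hmem_merged := merged_class C hstable G u v huv
  have hmerged_graph : memClass C (compGraph' G' (π cu)) ↔
      memClass C ((addEdge G u v).induce (cu.supp ∪ cv.supp)) := by
    unfold compGraph'
    rw [hsupp_merged]
  have hcard : ∀ {m : ℕ} (H : SimpleGraph (Fin m)),
      Nat.card {c : H.ConnectedComponent // memClass C (compGraph' H c)} =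
      (Finset.univ.filter (fun c => memClass C (compGraph' H c))).card := by
    intro m H
    rw [Nat.card_eq_fintype_card, Fintype.card_subtype]
  rw [kappaPlus, kappaPlus, hcard, hcard]
  set T : Finset G.ConnectedComponent :=
    Finset.univ.filter (fun c => memClass C (compGraph' G c)) with hT
  set T' : Finset G'.ConnectedComponent :=
    Finset.univ.filter (fun c => memClass C (compGraph' G' c)) with hT'def
  have hcusupp : cu ∈ T := by
    simp only [hT, Finset.mem_filter, Finset.mem_univ, true_and]
    exact hu
  by_cases hv : memClass C (compGraph' G cv)
  · -- both components in C; merged component in C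
    have hmer : memClass C (compGraph' G' (π cu)) := by
      exact hmerged_graph.mpr (hmem_merged.1 ⟨hu, hv⟩)
    have hinj : Set.InjOn π ↑(T.erase cv) := by
      intro c hc d hd h
      simp only [Finset.coe_erase, Set.mem_diff, Set.mem_singleton_iff] at hc hd
      rcases (hpi_eq c d).mp h with h | ⟨(h1 | h1), (h2 | h2)⟩
      · exact h
      · exact h1.trans h2.symm
      · exact absurd h2 hd.2
      · exact absurd h1 hc.2
      · exact absurd h1 hc.2
    have himg : T' = (T.erase cv).image π := by
      ext c'
      simp only [hT'def, Finset.mem_filter, Finset.mem_univ, true_and, Finset.mem_image,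
        Finset.mem_erase]
      constructor
      · intro hc'
        obtain ⟨c, rfl⟩ := hsurj c'
        by_cases h1 : c = cu ∨ c = cv
        · refine ⟨cu, ⟨hcucv, by simpa [hT] using hu⟩, ?_⟩
          exact ((hpi_eq cu c).mpr (Or.inr ⟨Or.inl rfl, h1⟩))
        · push_neg at h1
          refine ⟨c, ⟨h1.2, ?_⟩, rfl⟩
          simp only [hT, Finset.mem_filter, Finset.mem_univ, true_and]
          exact (hmem_other c h1.1 h1.2).mp hc'
      · rintro ⟨c, ⟨hne, hcT⟩, rfl⟩
        by_cases h1 : c = cu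
        · subst h1; exact hmer
        · simp only [hT, Finset.mem_filter, Finset.mem_univ, true_and] at hcT
          exact (hmem_other c h1 hne).mpr hcT
    have hcards : T'.card = T.card - 1 := by
      rw [himg, Finset.card_image_of_injOn hinj,
        Finset.card_erase_of_mem (by simpa [hT] using hv)]
    have hflag : (∀ c' : G'.ConnectedComponent, memClass C (compGraph' G' c')) ↔
        (∀ c : G.ConnectedComponent, memClass C (compGraph' G c)) := by
      constructor
      · intro hall c
        by_cases h1 : c = cu
        · subst h1; exact hu
        · by_cases h2 : c = cv
          · subst h2; exact hv
          · exact (hmem_other c h1 h2).mp (hall (π c))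
      · intro hall c'
        obtain ⟨c, rfl⟩ := hsurj c'
        by_cases h1 : c = cu ∨ c = cv
        · have : π c = π cu := (hpi_eq c cu).mpr (Or.inr ⟨by tauto, Or.inl rfl⟩)
          rw [this]; exact hmer
        · push_neg at h1
          exact (hmem_other c h1.1 h1.2).mpr (hall c)
      
    have hTpos : 1 ≤ T.card := Finset.card_pos.mpr ⟨cu, hcusupp⟩
    rw [hcards]
    by_cases hflagG : ∀ c : G.ConnectedComponent, memClass C (compGraph' G c)
    · rw [if_pos (hflag.mpr hflagG), if_pos hflagG]; omega
    · rw [if_neg (fun h => hflagG (hflag.mp h)), if_neg hflagG]; omega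
  · -- cv not in C; merged not in C
    have hmer : ¬ memClass C (compGraph' G' (π cu)) := by
      intro h
      exact hmem_merged.2 ⟨fun _ => hv, fun _ => hu⟩ (hmerged_graph.mp h)
    have hinj : Set.InjOn π ↑(T.erase cu) := by
      intro c hc d hd h
      simp only [Finset.coe_erase, Set.mem_diff, Set.mem_singleton_iff] at hc hd
      rcases (hpi_eq c d).mp h with h | ⟨(h1 | h1), (h2 | h2)⟩
      · exact h
      · exact absurd h1 hc.2
      · exact absurd h1 hc.2
      · exact absurd h2 hd.2
      · exact h1.trans h2.symm
    have himg : T' = (T.erase cu).image π := by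
      ext c'
      simp only [hT'def, Finset.mem_filter, Finset.mem_univ, true_and, Finset.mem_image,
        Finset.mem_erase]
      constructor
      · intro hc'
        obtain ⟨c, rfl⟩ := hsurj c'
        by_cases h1 : c = cu ∨ c = cv
        · exfalso
          have : π c = π cu := (hpi_eq c cu).mpr (Or.inr ⟨by tauto, Or.inl rfl⟩)
          rw [this] at hc'
          exact hmer hc'
        · push_neg at h1
          refine ⟨c, ⟨h1.1, ?_⟩, rfl⟩
          simp only [hT, Finset.mem_filter, Finset.mem_univ, true_and]
          exact (hmem_other c h1.1 h1.2).mp hc'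
      · rintro ⟨c, ⟨hne, hcT⟩, rfl⟩
        simp only [hT, Finset.mem_filter, Finset.mem_univ, true_and] at hcT
        have h2 : c ≠ cv := by
          rintro rfl
          exact hv hcT
        exact (hmem_other c hne h2).mpr hcT
    have hcards : T'.card = T.card - 1 := by
      rw [himg, Finset.card_image_of_injOn hinj, Finset.card_erase_of_mem hcusupp]
    have hTpos : 1 ≤ T.card := Finset.card_pos.mpr ⟨cu, hcusupp⟩
    have hflagG : ¬ ∀ c : G.ConnectedComponent, memClass C (compGraph' G c) :=
      fun h => hv (h cv)
    have hflagG' : ¬ ∀ c' : G'.ConnectedComponent, memClass C (compGraph' G' c') :=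
      fun h => hmer (h (π cu))
    rw [hcards, if_neg hflagG, if_neg hflagG']
    omega

end Kappa

noncomputable def rootOf (H : SimpleGraph (Fin n)) (c : H.ConnectedComponent) : Fin n :=
  c.exists_rep.choose

lemma rootOf_spec (H : SimpleGraph (Fin n)) (c : H.ConnectedComponent) :
    H.connectedComponentMk (rootOf H c) = c := c.exists_rep.choose_spec

/-- the set of "disconnecting" edges of `H` -/
noncomputable def bridgeSet (H : SimpleGraph (Fin n)) : Finset (Sym2 (Fin n)) :=
  Finset.univ.filter (fun e => e ∈ H.edgeSet ∧
    ∃ x y : Fin n, e = s(x, y) ∧ ¬ (H.deleteEdges {e}).Reachable x y)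

lemma card_comps_le (H : SimpleGraph (Fin n)) : Fintype.card H.ConnectedComponent ≤ n := by
  have := Fintype.card_le_of_surjective (H.connectedComponentMk)
    (fun c => c.exists_rep)
  simpa using this

lemma card_bridgeSet_le (H : SimpleGraph (Fin n)) :
    (bridgeSet H).card ≤ n - Fintype.card H.ConnectedComponent := by
  classical
  -- the "far endpoint" function
  have hQ : ∀ e ∈ bridgeSet H, ∃ z : Fin n, z ∈ e ∧
      ¬ (H.deleteEdges {e}).Reachable (rootOf H (H.connectedComponentMk z)) z := by
    intro e he
    simp only [bridgeSet, Finset.mem_filter, Finset.mem_univ, true_and] at he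
    obtain ⟨hE, x, y, rfl, hnr⟩ := he
    have hxy : H.connectedComponentMk x = H.connectedComponentMk y :=
      ConnectedComponent.eq.mpr (SimpleGraph.Adj.reachable (H.mem_edgeSet.mp hE))
    set r := rootOf H (H.connectedComponentMk x) with hr
    by_cases hx : (H.deleteEdges {s(x,y)}).Reachable r x
    · refine ⟨y, Sym2.mem_mk_right x y, ?_⟩
      rw [← hxy]
      intro hy
      exact hnr (hx.symm.trans hy)
    · exact ⟨x, Sym2.mem_mk_left x y, hx⟩
  set f : Sym2 (Fin n) → Fin n := fun e =>
    if h : ∃ z : Fin n, z ∈ e ∧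
        ¬ (H.deleteEdges {e}).Reachable (rootOf H (H.connectedComponentMk z)) z then
      h.choose
    else e.out.1 with hf
  have hfspec : ∀ e ∈ bridgeSet H, f e ∈ e ∧
      ¬ (H.deleteEdges {e}).Reachable (rootOf H (H.connectedComponentMk (f e))) (f e) := by
    intro e he
    have h := hQ e he
    simp only [hf, dif_pos h]
    exact h.choose_spec
  have hroots : Set.InjOn (rootOf H) ↑(Finset.univ : Finset H.ConnectedComponent) := by
    intro c _ d _ h
    rw [← rootOf_spec H c, ← rootOf_spec H d, h]
  -- f never hits a root
  have hfnotroot : ∀ e ∈ bridgeSet H, ∀ c : H.ConnectedComponent, f e ≠ rootOf H c := by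
    intro e he c hcontra
    obtain ⟨hmem, hnr⟩ := hfspec e he
    apply hnr
    have : rootOf H (H.connectedComponentMk (f e)) = f e := by
      rw [hcontra, rootOf_spec]
    rw [this]
  -- injectivity
  have hinj : Set.InjOn f ↑(bridgeSet H) := by
    intro e1 he1 e2 he2 hfe
    by_contra hne
    obtain ⟨hm1, hnr1⟩ := hfspec e1 he1
    obtain ⟨hm2, hnr2⟩ := hfspec e2 he2
    rw [← hfe] at hm2 hnr2
    set z := f e1 with hz
    have hm2' : z ∈ e2 := hm2
    have hnr2' : ¬ (H.deleteEdges {e2}).Reachable (rootOf H (H.connectedComponentMk z)) z := hnr2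
    set r := rootOf H (H.connectedComponentMk z) with hr
    have hzr : H.Reachable z r := by
      have := rootOf_spec H (H.connectedComponentMk z)
      exact (ConnectedComponent.eq.mp this).symm.symm |>.symm
    have hzner : z ≠ r := by
      intro h
      rw [← h] at hnr1
      exact hnr1 (Reachable.refl _)
    obtain ⟨w⟩ := hzr
    obtain ⟨p, hpath⟩ : ∃ p : H.Walk z r, p.IsPath := ⟨w.toPath, w.toPath.2⟩
    have hmem_edges : ∀ e' ∈ bridgeSet H, f e' = z → z ∈ e' →
        (¬ (H.deleteEdges {e'}).Reachable r z) → e' ∈ p.edges := by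
      intro e' _ _ _ hnr'
      by_contra habs
      have : ∀ ed ∈ p.edges, ed ∉ ({e'} : Set (Sym2 (Fin n))) := by
        intro ed hed hed'
        rw [Set.mem_singleton_iff] at hed'
        exact habs (hed' ▸ hed)
      exact hnr' ((p.toDeleteEdges {e'} this).reachable).symm
    have he1p : e1 ∈ p.edges := hmem_edges e1 he1 rfl hm1 hnr1
    have he2p : e2 ∈ p.edges := hmem_edges e2 he2 hfe.symm hm2' hnr2'
    -- p = cons ...
    obtain ⟨b, hadj, q, rfl⟩ := Walk.exists_eq_cons_of_ne hzner p
    have hq : z ∉ q.support := (Walk.cons_isPath_iff hadj q).mp hpath |>.2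
    have hfirst : ∀ e' : Sym2 (Fin n), e' ∈ (Walk.cons hadj q).edges → z ∈ e' → e' = s(z, b) := by
      intro e' he' hze'
      rw [Walk.edges_cons] at he'
      rcases List.mem_cons.mp he' with h | h
      · exact h
      · exfalso
        obtain ⟨y', rfl⟩ := Sym2.mem_iff_exists.mp hze'
        exact hq (q.fst_mem_support_of_mem_edges h)
    exact hne ((hfirst e1 he1p hm1).trans (hfirst e2 he2p hm2').symm)
  -- counting
  have hmaps : ∀ e ∈ bridgeSet H, f e ∈ Finset.univ \ (Finset.univ.image (rootOf H)) := by
    intro e he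
    simp only [Finset.mem_sdiff, Finset.mem_univ, true_and, Finset.mem_image, not_exists]
    intro c hc
    exact hfnotroot e he c (Eq.symm hc)
  have hcard := Finset.card_le_card_of_injOn f hmaps hinj
  rwa [Finset.card_sdiff_of_subset (Finset.subset_univ _), Finset.card_univ, Fintype.card_fin,
    Finset.card_image_of_injOn hroots, Finset.card_univ] at hcard

lemma numeric_bound {α : Type*} [DecidableEq α] (T : Finset α) (sc : α → ℕ) (n s k : ℕ)
    (hk : 1 ≤ k)
    (hpos : ∀ c ∈ T, 1 ≤ sc c) (hscn : ∀ c ∈ T, sc c ≤ n)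
    (hs : s = ∑ c ∈ T, sc c) (hsn : s ≤ n)
    (hcase : (T.card = k + 1 ∧ s = n) ∨ (T.card = k ∧ s + 1 ≤ n)) :
    2 * (k * (n - k)) ≤ (∑ c ∈ T, sc c * (n - sc c)) + (n - s) * s := by
  set m := T.card with hm
  have hms : m ≤ s := by
    rw [hs, hm, Finset.card_eq_sum_ones]
    exact Finset.sum_le_sum hpos
  have hmk : k ≤ m := by rcases hcase with ⟨h, _⟩ | ⟨h, _⟩ <;> omega
  have hQtot : (∑ c ∈ T, sc c * (n - sc c)) + (∑ c ∈ T, sc c * sc c) = s * n := by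
    rw [← Finset.sum_add_distrib, hs, Finset.sum_mul]
    refine Finset.sum_congr rfl (fun c hc => ?_)
    have h := hscn c hc
    have h2 : (n - sc c) + sc c = n := by omega
    calc sc c * (n - sc c) + sc c * sc c = sc c * ((n - sc c) + sc c) := by ring
    _ = sc c * n := by rw [h2]
  have hsc_le : ∀ c ∈ T, sc c ≤ s - m + 1 := by
    intro c hc
    have h1 : sc c + ∑ x ∈ T.erase c, sc x = ∑ x ∈ T, sc x := Finset.add_sum_erase T sc hc
    have h2 : (T.erase c).card ≤ ∑ x ∈ T.erase c, sc x := by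
      rw [Finset.card_eq_sum_ones]
      exact Finset.sum_le_sum (fun x hx => hpos x (Finset.mem_of_mem_erase hx))
    have h3 : (T.erase c).card = m - 1 := by rw [Finset.card_erase_of_mem hc]
    have h4 : 1 ≤ m := Finset.card_pos.mpr ⟨c, hc⟩
    omega
  have hsum1 : (∑ c ∈ T, (sc c - 1)) + m = s := by
    rw [hs, hm, Finset.card_eq_sum_ones, ← Finset.sum_add_distrib]
    exact Finset.sum_congr rfl (fun c hc => by have := hpos c hc; omega)
  have hQle : (∑ c ∈ T, sc c * sc c) ≤ s + (s - m) * (s - m + 1) := by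
    have h1 : (∑ c ∈ T, sc c * sc c) = (∑ c ∈ T, sc c * (sc c - 1)) + s := by
      rw [hs, ← Finset.sum_add_distrib]
      refine Finset.sum_congr rfl (fun c hc => ?_)
      have h := hpos c hc
      obtain ⟨d, hd⟩ := Nat.exists_eq_add_of_le h
      rw [hd]
      simp only [Nat.add_sub_cancel_left]
      ring
    have h2 : (∑ c ∈ T, sc c * (sc c - 1)) ≤ (s - m) * (s - m + 1) := by
      calc (∑ c ∈ T, sc c * (sc c - 1)) ≤ ∑ c ∈ T, (s - m + 1) * (sc c - 1) :=
        Finset.sum_le_sum (fun c hc => Nat.mul_le_mul_right _ (hsc_le c hc))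
      _ = (s - m + 1) * ∑ c ∈ T, (sc c - 1) := by rw [Finset.mul_sum]
      _ = (s - m) * (s - m + 1) := by
          rw [show (∑ c ∈ T, (sc c - 1)) = s - m by omega]
          ring
    omega
  set A := ∑ c ∈ T, sc c * (n - sc c) with hA
  set Q := ∑ c ∈ T, sc c * sc c with hQ
  have hkk : k ≤ k * k := Nat.le_mul_of_pos_left k hk
  rcases hcase with ⟨hm', hsn'⟩ | ⟨hm', hsn'⟩
  · -- s = n, m = k + 1
    subst hsn'
    rw [Nat.sub_self, Nat.zero_mul, Nat.add_zero]
    obtain ⟨e, he⟩ : ∃ e, s = k + e + 1 := ⟨s - k - 1, by omega⟩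
    have hsm : s - m = e := by omega
    rw [hsm] at hQle
    have hsk : s - k = e + 1 := by omega
    rw [hsk]
    nlinarith [hQtot, hQle, hkk, he]
  · -- m = k, s + 1 ≤ n
    obtain ⟨d, hd⟩ : ∃ d, s = k + d := ⟨s - k, by omega⟩
    obtain ⟨e, het⟩ : ∃ e, n = s + e + 1 := ⟨n - s - 1, by omega⟩
    have hsm : s - m = d := by omega
    rw [hsm] at hQle
    have h1 : n - k = d + e + 1 := by omega
    have h2 : n - s = e + 1 := by omega
    rw [h1, h2]
    nlinarith [hQtot, hQle, hkk, hd, het]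


def elig (C : ∀ m : ℕ, Set (SimpleGraph (Fin m))) {n : ℕ} (G : SimpleGraph (Fin n))
    (e : Sym2 (Fin n)) : Prop :=
  ∃ u v : Fin n, e = s(u, v) ∧ G.connectedComponentMk u ≠ G.connectedComponentMk v ∧
    memClass C (compGraph G u)


variable (C : ∀ m : ℕ, Set (SimpleGraph (Fin m))) {n : ℕ}

lemma card_elig_ge (G : SimpleGraph (Fin n)) (k : ℕ) (hk : 1 ≤ k)
    (hκ : kappaPlus C G = k + 1) :
    k * (n - k) ≤ (Finset.univ.filter (elig C G)).card := by
  classical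
  set mk := G.connectedComponentMk with hmk
  set T : Finset G.ConnectedComponent :=
    Finset.univ.filter (fun c => memClass C (compGraph' G c)) with hT
  set m := T.card with hm
  set sc : G.ConnectedComponent → ℕ :=
    fun c => (Finset.univ.filter (fun x : Fin n => mk x = c)).card with hsc
  set P : Finset (Fin n) := Finset.univ.filter (fun x => memClass C (compGraph G x)) with hP
  set s := P.card with hs
  -- basic facts
  have hmemP : ∀ x : Fin n, x ∈ P ↔ mk x ∈ T := by
    intro x
    simp only [hP, hT, Finset.mem_filter, Finset.mem_univ, true_and]
    exact Iff.rfl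
  have hsc_pos : ∀ c : G.ConnectedComponent, 1 ≤ sc c := by
    intro c
    obtain ⟨x, hx⟩ := c.exists_rep
    refine Finset.card_pos.mpr ⟨x, ?_⟩
    simp only [hsc, Finset.mem_filter, Finset.mem_univ, true_and, hmk]
    exact hx
  have hsc_le : ∀ c : G.ConnectedComponent, sc c ≤ n := by
    intro c
    calc sc c ≤ (Finset.univ : Finset (Fin n)).card := Finset.card_le_card (Finset.filter_subset _ _)
    _ = n := by simp
  have hsumT : ∀ (U : Finset G.ConnectedComponent),
      (Finset.univ.filter (fun x : Fin n => mk x ∈ U)).card = ∑ c ∈ U, sc c := by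
    intro U
    rw [Finset.card_eq_sum_card_fiberwise (f := mk) (t := U)
      (s := Finset.univ.filter (fun x : Fin n => mk x ∈ U))
      (fun x hx => (Finset.mem_filter.mp (Finset.mem_coe.mp hx)).2)]
    refine Finset.sum_congr rfl (fun c hc => ?_)
    congr 1
    ext x
    simp only [Finset.mem_filter, Finset.mem_univ, true_and, and_iff_right_iff_imp]
    intro h; rw [h]; exact hc
  have hsP : s = ∑ c ∈ T, sc c := by
    rw [hs, ← hsumT]
    congr 1
    ext x
    simp only [hP, Finset.mem_filter, Finset.mem_univ, true_and]
    constructor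
    · intro h
      exact (hmemP x).mp (by simp [hP, h])
    · intro h
      have := (hmemP x).mpr h
      simp only [hP, Finset.mem_filter, Finset.mem_univ, true_and] at this
      exact this
  have hs_le_n : s ≤ n := by
    calc s ≤ (Finset.univ : Finset (Fin n)).card := Finset.card_le_card (Finset.filter_subset _ _)
    _ = n := by simp
  -- kappa facts
  have hcard : Nat.card {c : G.ConnectedComponent // memClass C (compGraph' G c)} = m := by
    rw [Nat.card_eq_fintype_card, Fintype.card_subtype]
  have hκ' := hκ
  rw [kappaPlus, hcard] at hκ'
  -- the ordered pair sets
  set O1 : Finset (Fin n × Fin n) := Finset.univ.filter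
    (fun p => memClass C (compGraph G p.1) ∧ mk p.1 ≠ mk p.2) with hO1
  set O2 : Finset (Fin n × Fin n) := Finset.univ.filter
    (fun p => ¬ memClass C (compGraph G p.1) ∧ memClass C (compGraph G p.2)) with hO2
  set O : Finset (Fin n × Fin n) := Finset.univ.filter
    (fun p => mk p.1 ≠ mk p.2 ∧
      (memClass C (compGraph G p.1) ∨ memClass C (compGraph G p.2))) with hO
  have hcompeq : ∀ x y : Fin n, mk x = mk y →
      (memClass C (compGraph G x) ↔ memClass C (compGraph G y)) := by
    intro x y h
    unfold compGraph
    rw [show G.connectedComponentMk x = G.connectedComponentMk y from h]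
  have hO12sub : O1 ∪ O2 ⊆ O := by
    intro p hp
    rcases Finset.mem_union.mp hp with hp | hp
    · simp only [hO1, Finset.mem_filter, Finset.mem_univ, true_and] at hp
      simp only [hO, Finset.mem_filter, Finset.mem_univ, true_and]
      exact ⟨hp.2, Or.inl hp.1⟩
    · simp only [hO2, Finset.mem_filter, Finset.mem_univ, true_and] at hp
      simp only [hO, Finset.mem_filter, Finset.mem_univ, true_and]
      refine ⟨fun h => hp.1 ((hcompeq p.1 p.2 h).mpr hp.2), Or.inr hp.2⟩
  have hO12disj : Disjoint O1 O2 := by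
    rw [Finset.disjoint_left]
    intro p hp1 hp2
    simp only [hO1, Finset.mem_filter, Finset.mem_univ, true_and] at hp1
    simp only [hO2, Finset.mem_filter, Finset.mem_univ, true_and] at hp2
    exact hp2.1 hp1.1
  -- card O2
  have hcardO2 : O2.card = (n - s) * s := by
    have : O2 = (Finset.univ.filter (fun x => ¬ memClass C (compGraph G x))) ×ˢ P := by
      ext p
      simp only [hO2, hP, Finset.mem_filter, Finset.mem_univ, true_and, Finset.mem_product]
    rw [this, Finset.card_product]
    have h1 := Finset.card_filter_add_card_filter_not
      (s := (Finset.univ : Finset (Fin n))) (p := fun x => memClass C (compGraph G x))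
    have hs2 : s = (Finset.univ.filter (fun x => memClass C (compGraph G x))).card := by
      rw [hs, hP]
    have hcu : (Finset.univ : Finset (Fin n)).card = n := by simp
    have : ((Finset.univ : Finset (Fin n)).filter (fun x => ¬ memClass C (compGraph G x))).card
        = n - s := by omega
    rw [this]
  -- card O1
  have hcardO1 : O1.card = ∑ c ∈ T, sc c * (n - sc c) := by
    rw [hO1]
    rw [Finset.card_eq_sum_card_fiberwise (f := fun p => mk p.1) (t := T)
      (fun p hp => by
        simp only [Finset.mem_coe, Finset.mem_filter, Finset.mem_univ, true_and] at hp
        exact (hmemP p.1).mp (by simp [hP, hp.1]))]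
    refine Finset.sum_congr rfl (fun c hc => ?_)
    -- fiber over c : pairs (x,y) with mk x = c, mk y ≠ c
    have : ((Finset.univ.filter (fun p : Fin n × Fin n =>
        memClass C (compGraph G p.1) ∧ mk p.1 ≠ mk p.2)).filter (fun p => mk p.1 = c)) =
        (Finset.univ.filter (fun x : Fin n => mk x = c)) ×ˢ
        (Finset.univ.filter (fun y : Fin n => ¬ mk y = c)) := by
      ext p
      simp only [Finset.mem_filter, Finset.mem_univ, true_and, Finset.mem_product]
      constructor
      · rintro ⟨⟨h1, h2⟩, h3⟩
        exact ⟨h3, fun h => h2 (h3.trans h.symm)⟩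
      · rintro ⟨h1, h2⟩
        have hmemc : memClass C (compGraph G p.1) := by
          simp only [hT, Finset.mem_filter, Finset.mem_univ, true_and] at hc
          have : memClass C (compGraph' G (mk p.1)) := by rw [h1]; exact hc
          exact this
        exact ⟨⟨hmemc, fun h => h2 (h ▸ h1)⟩, h1⟩
    rw [this, Finset.card_product]
    have h1 := Finset.card_filter_add_card_filter_not
      (s := (Finset.univ : Finset (Fin n))) (p := fun y : Fin n => mk y = c)
    have hcu : (Finset.univ : Finset (Fin n)).card = n := by simp
    have hscc : sc c = (Finset.univ.filter (fun x : Fin n => mk x = c)).card := rfl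
    have h2 : ((Finset.univ : Finset (Fin n)).filter (fun y : Fin n => ¬ mk y = c)).card
        = n - sc c := by omega
    rw [h2, hscc]
  -- assemble
  set E := Finset.univ.filter (elig C G) with hE
  have hOcard : O1.card + O2.card ≤ O.card := by
    rw [← Finset.card_union_of_disjoint hO12disj]
    exact Finset.card_le_card hO12sub
  have hmapsto : ∀ p ∈ O, s(p.1, p.2) ∈ E := by
    intro p hp
    simp only [hO, Finset.mem_filter, Finset.mem_univ, true_and] at hp
    obtain ⟨hne, h | h⟩ := hp
    · simp only [hE, Finset.mem_filter, Finset.mem_univ, true_and]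
      exact ⟨p.1, p.2, rfl, hne, h⟩
    · simp only [hE, Finset.mem_filter, Finset.mem_univ, true_and]
      exact ⟨p.2, p.1, Sym2.eq_swap, hne.symm, h⟩
  have hfib : ∀ a ∈ E, (O.filter (fun p => s(p.1, p.2) = a)).card ≤ 2 := by
    intro a ha
    simp only [hE, Finset.mem_filter, Finset.mem_univ, true_and] at ha
    obtain ⟨x, y, rfl, _, _⟩ := ha
    have hsub : O.filter (fun p => s(p.1, p.2) = s(x, y)) ⊆ {(x, y), (y, x)} := by
      intro p hp
      simp only [Finset.mem_filter] at hp
      rcases Sym2.eq_iff.mp hp.2 with ⟨h1, h2⟩ | ⟨h1, h2⟩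
      · simp [Finset.mem_insert, Prod.ext_iff, h1, h2]
      · simp [Finset.mem_insert, Prod.ext_iff, h1, h2]
    calc (O.filter (fun p => s(p.1, p.2) = s(x, y))).card
        ≤ ({(x, y), (y, x)} : Finset (Fin n × Fin n)).card := Finset.card_le_card hsub
      _ ≤ 2 := Finset.card_insert_le _ _ |>.trans (by simp)
  have hOE : O.card ≤ 2 * E.card :=
    Finset.card_le_mul_card_image_of_maps_to hmapsto 2 hfib
  have hTcases : (T.card = k + 1 ∧ s = n) ∨ (T.card = k ∧ s + 1 ≤ n) := by
    by_cases hall : ∀ c : G.ConnectedComponent, memClass C (compGraph' G c)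
    · left
      rw [if_pos hall] at hκ'
      refine ⟨by omega, ?_⟩
      have : P = Finset.univ := by
        ext x
        simp only [hP, Finset.mem_filter, Finset.mem_univ, true_and, iff_true]
        exact hall (mk x)
      rw [hs, this, Finset.card_univ, Fintype.card_fin]
    · right
      rw [if_neg hall] at hκ'
      refine ⟨by omega, ?_⟩
      push_neg at hall
      obtain ⟨c, hc⟩ := hall
      obtain ⟨x, hx⟩ := c.exists_rep
      have hxP : x ∉ P := by
        simp only [hP, Finset.mem_filter, Finset.mem_univ, true_and]
        intro h
        subst hx
        exact hc h
      have : s < n := by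
        have h2 : P ⊂ Finset.univ := Finset.ssubset_univ_iff.mpr (fun h => hxP (h ▸ Finset.mem_univ x))
        have := Finset.card_lt_card h2
        simpa using this
      omega
  have hnum := numeric_bound T sc n s k hk (fun c _ => hsc_pos c) (fun c _ => hsc_le c)
    hsP hs_le_n hTcases
  omega



/-- `|A^{k+1}|·k(n−k) ≤ |A^k|·(n−k)` for every `k ≥ 1` with `A^{k+1}` nonempty;
in particular `|A^{k+1}| ≤ |A^k|/k`, i.e. `k·|A^{k+1}| ≤ |A^k|`, for all `k ≥ 1`. -/
theorem stmt7 (n : ℕ) (𝒜 : Finset (SimpleGraph (Fin n))) (hne : 𝒜.Nonempty)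
    (C : ∀ m : ℕ, Set (SimpleGraph (Fin m)))
    (hCconn : ∀ m, ∀ H ∈ C m, SimpleGraph.Connected H)
    (hstable : bridgeStable C)
    (hAdd : ∀ G ∈ 𝒜, ∀ u v : Fin n,
      G.connectedComponentMk u ≠ G.connectedComponentMk v →
      memClass C (compGraph G u) → addEdge G u v ∈ 𝒜) :
    (∀ k : ℕ, 1 ≤ k → (∃ G ∈ 𝒜, kappaPlus C G = k + 1) →
      cardAk C 𝒜 (k + 1) * (k * (n - k)) ≤ cardAk C 𝒜 k * (n - k)) ∧
    (∀ k : ℕ, 1 ≤ k → k * cardAk C 𝒜 (k + 1) ≤ cardAk C 𝒜 k) := by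
  classical
  have hcardAk : ∀ j : ℕ, cardAk C 𝒜 j = (𝒜.filter (fun G => kappaPlus C G = j)).card := by
    intro j
    rw [cardAk, Nat.card_eq_fintype_card, Fintype.card_subtype]
    congr 1
    ext G
    simp only [Finset.mem_filter, Finset.mem_univ, true_and]
  have kappa_le : ∀ (H : SimpleGraph (Fin n)),
      kappaPlus C H ≤ Fintype.card H.ConnectedComponent := by
    intro H
    rw [kappaPlus, Nat.card_eq_fintype_card, Fintype.card_subtype]
    by_cases hall : ∀ c : H.ConnectedComponent, memClass C (compGraph' H c)
    · rw [if_pos hall]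
      have := Finset.card_le_card (Finset.filter_subset
        (fun c => memClass C (compGraph' H c)) Finset.univ)
      rw [Finset.card_univ] at this
      omega
    · rw [if_neg hall]
      push_neg at hall
      obtain ⟨c, hc⟩ := hall
      have hss : (Finset.univ.filter fun c => memClass C (compGraph' H c)) ⊂ Finset.univ := by
        rw [Finset.ssubset_iff_of_subset (Finset.subset_univ _)]
        refine ⟨c, Finset.mem_univ c, ?_⟩
        simp only [Finset.mem_filter, Finset.mem_univ, true_and]
        exact hc
      have := Finset.card_lt_card hss
      rw [Finset.card_univ] at this
      omega
  have main : ∀ k : ℕ, 1 ≤ k → (∃ G ∈ 𝒜, kappaPlus C G = k + 1) →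
      cardAk C 𝒜 (k + 1) * (k * (n - k)) ≤ cardAk C 𝒜 k * (n - k) := by
    intro k hk _
    set Ak1 := 𝒜.filter (fun G => kappaPlus C G = k + 1) with hAk1
    set Ak := 𝒜.filter (fun G => kappaPlus C G = k) with hAk
    set Fwd : Finset (SimpleGraph (Fin n) × Sym2 (Fin n)) :=
      (Ak1 ×ˢ Finset.univ).filter (fun q => elig C q.1 q.2) with hFwd
    set Bwd : Finset (SimpleGraph (Fin n) × Sym2 (Fin n)) :=
      (Ak ×ˢ Finset.univ).filter (fun q => q.2 ∈ bridgeSet q.1) with hBwd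
    have hFwdfst : ∀ q ∈ Fwd, q.1 ∈ Ak1 := by
      intro q hq
      simp only [hFwd, Finset.mem_filter, Finset.mem_product] at hq
      exact hq.1.1
    have hFwdcard : Ak1.card * (k * (n - k)) ≤ Fwd.card := by
      rw [Finset.card_eq_sum_card_fiberwise hFwdfst]
      calc Ak1.card * (k * (n - k)) = ∑ _G ∈ Ak1, k * (n - k) := by
            rw [Finset.sum_const, smul_eq_mul]
        _ ≤ ∑ G ∈ Ak1, (Fwd.filter (fun q => q.1 = G)).card := by
            refine Finset.sum_le_sum (fun G hG => ?_)
            have hfib : Fwd.filter (fun q => q.1 = G) =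
                {G} ×ˢ (Finset.univ.filter (elig C G)) := by
              ext q
              simp only [hFwd, Finset.mem_filter, Finset.mem_product, Finset.mem_univ,
                Finset.mem_singleton, true_and, and_true]
              constructor
              · rintro ⟨⟨_, h2⟩, h3⟩
                subst h3
                exact ⟨rfl, h2⟩
              · rintro ⟨h1, h2⟩
                subst h1
                exact ⟨⟨hG, h2⟩, rfl⟩
            rw [hfib, Finset.card_product, Finset.card_singleton, one_mul]
            simp only [hAk1, Finset.mem_filter] at hG
            exact card_elig_ge C G k hk hG.2
    -- injection from Fwd into Bwd
    have hmaps : ∀ q ∈ Fwd, (q.1 ⊔ SimpleGraph.fromEdgeSet {q.2}, q.2) ∈ Bwd := by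
      rintro ⟨G, e⟩ hq
      simp only [hFwd, Finset.mem_filter, Finset.mem_product, Finset.mem_univ, and_true,
        true_and] at hq
      obtain ⟨hG1, u, v, rfl, hne, hmem⟩ := hq
      simp only [hAk1, Finset.mem_filter] at hG1
      obtain ⟨hG𝒜, hGκ⟩ := hG1
      have hreach : ¬ G.Reachable u v := fun h => hne (ConnectedComponent.eq.mpr h)
      have huvne : u ≠ v := by rintro rfl; exact hreach (Reachable.refl u)
      have hnadj : ¬ G.Adj u v := fun h => hreach h.reachable
      have haddmem : addEdge G u v ∈ 𝒜 := hAdd G hG𝒜 u v hne hmem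
      have hκ' : kappaPlus C (addEdge G u v) + 1 = kappaPlus C G :=
        kappa_addEdge C G u v hreach hstable hmem
      simp only [hBwd, Finset.mem_filter, Finset.mem_product, Finset.mem_univ, and_true,
        true_and]
      constructor
      · show addEdge G u v ∈ Ak
        simp only [hAk, Finset.mem_filter]
        exact ⟨haddmem, by omega⟩
      · show s(u, v) ∈ bridgeSet (G ⊔ SimpleGraph.fromEdgeSet {s(u, v)})
        simp only [bridgeSet, Finset.mem_filter, Finset.mem_univ, true_and]
        refine ⟨?_, u, v, rfl, ?_⟩
        · rw [SimpleGraph.mem_edgeSet]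
          show (addEdge G u v).Adj u v
          rw [addEdge_adj]
          exact Or.inr ⟨rfl, huvne⟩
        · show ¬ ((addEdge G u v).deleteEdges {s(u, v)}).Reachable u v
          rw [deleteEdges_addEdge G u v hnadj]
          exact hreach
    have hinj : Set.InjOn (fun q : SimpleGraph (Fin n) × Sym2 (Fin n) =>
        (q.1 ⊔ SimpleGraph.fromEdgeSet {q.2}, q.2)) ↑Fwd := by
      rintro ⟨G, e⟩ hq ⟨G', e'⟩ hq' heq
      simp only [Prod.mk.injEq] at heq
      obtain ⟨hsup, he⟩ := heq
      subst he
      have hdel : ∀ (H : SimpleGraph (Fin n)), elig C H e →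
          (H ⊔ SimpleGraph.fromEdgeSet {e}).deleteEdges {e} = H := by
        intro H helig
        obtain ⟨u, v, rfl, hne, _⟩ := helig
        have hreach : ¬ H.Reachable u v := fun h => hne (ConnectedComponent.eq.mpr h)
        have hnadj : ¬ H.Adj u v := fun h => hreach h.reachable
        exact deleteEdges_addEdge H u v hnadj
      have h1 := hdel G (by
        have hq2 : (G, e) ∈ Fwd := hq
        simp only [hFwd, Finset.mem_filter] at hq2
        exact hq2.2)
      have h2 := hdel G' (by
        have hq2 : (G', e) ∈ Fwd := hq'
        simp only [hFwd, Finset.mem_filter] at hq2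
        exact hq2.2)
      have : G = G' := by rw [← h1, ← h2, hsup]
      simp [this]
    have hFB : Fwd.card ≤ Bwd.card :=
      Finset.card_le_card_of_injOn _ hmaps hinj
    have hBwdfst : ∀ q ∈ Bwd, q.1 ∈ Ak := by
      intro q hq
      simp only [hBwd, Finset.mem_filter, Finset.mem_product] at hq
      exact hq.1.1
    have hBwdcard : Bwd.card ≤ Ak.card * (n - k) := by
      rw [Finset.card_eq_sum_card_fiberwise hBwdfst]
      calc ∑ H ∈ Ak, (Bwd.filter (fun q => q.1 = H)).card
          ≤ ∑ _H ∈ Ak, (n - k) := by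
            refine Finset.sum_le_sum (fun H hH => ?_)
            have hfib : Bwd.filter (fun q => q.1 = H) = {H} ×ˢ bridgeSet H := by
              ext q
              simp only [hBwd, Finset.mem_filter, Finset.mem_product, Finset.mem_univ,
                Finset.mem_singleton, true_and, and_true]
              constructor
              · rintro ⟨⟨_, h2⟩, h3⟩
                subst h3
                exact ⟨rfl, h2⟩
              · rintro ⟨h1, h2⟩
                subst h1
                exact ⟨⟨hH, h2⟩, rfl⟩
            rw [hfib, Finset.card_product, Finset.card_singleton, one_mul]
            have hb := card_bridgeSet_le H
            have hκH : kappaPlus C H = k := by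
              simp only [hAk, Finset.mem_filter] at hH
              exact hH.2
            have hkc : k ≤ Fintype.card H.ConnectedComponent := hκH ▸ kappa_le H
            omega
        _ = Ak.card * (n - k) := by rw [Finset.sum_const, smul_eq_mul]
    rw [hcardAk, hcardAk]
    calc Ak1.card * (k * (n - k)) ≤ Fwd.card := hFwdcard
      _ ≤ Bwd.card := hFB
      _ ≤ Ak.card * (n - k) := hBwdcard
  refine ⟨main, ?_⟩
  intro k hk
  by_cases hex : ∃ G ∈ 𝒜, kappaPlus C G = k + 1
  · obtain ⟨G, hG𝒜, hGκ⟩ := hex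
    have hkn : k + 1 ≤ n := by
      have h1 := kappa_le G
      have h2 := card_comps_le G
      omega
    have h := main k hk ⟨G, hG𝒜, hGκ⟩
    rw [← mul_assoc] at h
    have h2 := Nat.le_of_mul_le_mul_right h (by omega : 0 < n - k)
    rw [mul_comm]
    exact h2
  · have hempty : IsEmpty {G : SimpleGraph (Fin n) // G ∈ 𝒜 ∧ kappaPlus C G = k + 1} := by
      constructor
      rintro ⟨G, hG1, hG2⟩
      exact hex ⟨G, hG1, hG2⟩
    have : cardAk C 𝒜 (k + 1) = 0 := by
      rw [cardAk]
      exact Nat.card_of_isEmpty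
    simp [this]
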